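/- arXiv:2303.07082 — 4 statements merged into one kernel-verified Lean document; each statement's English description precedes it below -/
import Mathlib

section
/- Let N = N_min = d(d+1)/2 and let q_1, …, q_N be unit vectors in ℝ^d with A = (h(q_1), …, h(q_N))ᵀ. If AᵀA = (N/(d(d+2)))·(1_d·1_dᵀ + 2I), then |q_i · q_j| = 1/√(d+2) for all i ≠ j. -/
open Matrix

abbrev Idx (d : ℕ) : Type := Fin d ⊕ {p : Fin d × Fin d // p.1 < p.2}

/-- The half-vectorized outer-product map
`h(q) = (q_1², …, q_d², √2 q_1 q_2, …, √2 q_{d-1} q_d)`. -/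
noncomputable def hvec {d : ℕ} (q : Fin d → ℝ) : Idx d → ℝ :=
  Sum.elim (fun i => q i ^ 2) (fun p => Real.sqrt 2 * (q p.1.1 * q p.1.2))

/-- The vector `1_d ∈ ℝ^{d(d+1)/2}`: first `d` entries `1`, the rest `0`. -/
def oneVec (d : ℕ) : Idx d → ℝ := Sum.elim 1 0

/-- The matrix `1_d 1_dᵀ`. -/
noncomputable def Jmat (d : ℕ) : Matrix (Idx d) (Idx d) ℝ :=
  vecMulVec (oneVec d) (oneVec d)

/-- The C-cost `C(A) = (N / (N_min d (d+2))) Tr((AᵀA)⁻¹ (1_d 1_dᵀ + 2I))`. -/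
noncomputable def Ccost {d N : ℕ} (A : Matrix (Fin N) (Idx d) ℝ) : ℝ :=
  ((N : ℝ) / (((d * (d + 1) / 2 : ℕ) : ℝ) * ((d : ℝ) * ((d : ℝ) + 2)))) *
    ((Aᵀ * A)⁻¹ * (Jmat d + (2 : ℝ) • (1 : Matrix (Idx d) (Idx d) ℝ))).trace

section Aux
open Finset

lemma hvec_dot {d : ℕ} (q r : Fin d → ℝ) : hvec q ⬝ᵥ hvec r = (q ⬝ᵥ r) ^ 2 := by
  classical
  set a : Fin d → ℝ := fun k => q k * r k with ha
  have h1 : (q ⬝ᵥ r) = ∑ k, a k := by simp [dotProduct, ha]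
  have h2 : (∑ k, a k) ^ 2 = ∑ p ∈ ((univ : Finset (Fin d)) ×ˢ univ), a p.1 * a p.2 := by
    rw [sq, Finset.sum_mul_sum, Finset.sum_product]
  have hsplit : ∑ p ∈ ((univ : Finset (Fin d)) ×ˢ univ), a p.1 * a p.2
      = ∑ p ∈ (univ : Finset (Fin d)).diag, a p.1 * a p.2
        + ∑ p ∈ (univ : Finset (Fin d)).offDiag, a p.1 * a p.2 := by
    rw [← Finset.diag_union_offDiag, Finset.sum_union (Finset.disjoint_diag_offDiag _)]
  have hdiag : ∑ p ∈ (univ : Finset (Fin d)).diag, a p.1 * a p.2 = ∑ k, a k * a k := by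
    rw [Finset.sum_diag]
  -- split offDiag into < and >
  have hoff : ∑ p ∈ (univ : Finset (Fin d)).offDiag, a p.1 * a p.2
      = 2 * ∑ p ∈ (univ : Finset (Fin d)).offDiag with p.1 < p.2, a p.1 * a p.2 := by
    rw [← Finset.sum_filter_add_sum_filter_not ((univ : Finset (Fin d)).offDiag)
      (fun p => p.1 < p.2)]
    have hswap : ∑ p ∈ (univ : Finset (Fin d)).offDiag with ¬ p.1 < p.2, a p.1 * a p.2
        = ∑ p ∈ (univ : Finset (Fin d)).offDiag with p.1 < p.2, a p.1 * a p.2 := by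
      apply Finset.sum_nbij' (fun p => Prod.swap p) (fun p => Prod.swap p)
      · intro p hp
        simp only [Finset.mem_filter, Finset.mem_offDiag, not_lt] at hp ⊢
        exact ⟨⟨by simp, by simp, (Ne.symm hp.1.2.2)⟩, lt_of_le_of_ne hp.2 (Ne.symm hp.1.2.2)⟩
      · intro p hp
        simp only [Finset.mem_filter, Finset.mem_offDiag, not_lt] at hp ⊢
        exact ⟨⟨by simp, by simp, (Ne.symm hp.1.2.2)⟩, le_of_lt hp.2⟩
      · intro p _; simp
      · intro p _; simp
      · intro p _; simp [Prod.fst_swap, Prod.snd_swap]; ring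
    rw [hswap]; ring
  -- relate subtype sum to filter sum
  have hsub : ∑ p : {p : Fin d × Fin d // p.1 < p.2}, a p.1.1 * a p.1.2
      = ∑ p ∈ (univ : Finset (Fin d)).offDiag with p.1 < p.2, a p.1 * a p.2 := by
    rw [← Finset.sum_subtype ((univ : Finset (Fin d)).offDiag.filter (fun p => p.1 < p.2))
      (fun p => ?_) (fun p => a p.1 * a p.2)]
    simp only [Finset.mem_filter, Finset.mem_offDiag]
    constructor
    · exact fun h => h.2
    · exact fun h => ⟨⟨by simp, by simp, ne_of_lt h⟩, h⟩
  have hL : hvec q ⬝ᵥ hvec r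
      = ∑ k, a k * a k + 2 * ∑ p : {p : Fin d × Fin d // p.1 < p.2}, a p.1.1 * a p.1.2 := by
    rw [dotProduct, Fintype.sum_sum_type]
    congr 1
    · apply Finset.sum_congr rfl; intro k _; simp [hvec, ha]; ring
    · rw [Finset.mul_sum]
      apply Finset.sum_congr rfl; intro p _
      simp only [hvec, Sum.elim_inr, ha]
      rw [mul_mul_mul_comm, Real.mul_self_sqrt (by norm_num : (0:ℝ) ≤ 2)]
      ring
  rw [hL, h1, h2, hsplit, hdiag, hoff, hsub]

lemma hvec_dot_one {d : ℕ} (q : Fin d → ℝ) (h : ∑ k, q k ^ 2 = 1) :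
    hvec q ⬝ᵥ oneVec d = 1 := by
  rw [dotProduct, Fintype.sum_sum_type]
  simp [hvec, oneVec, h]

lemma one_dot_one (d : ℕ) : oneVec d ⬝ᵥ oneVec d = (d : ℝ) := by
  rw [dotProduct, Fintype.sum_sum_type]
  simp [oneVec]

lemma vecMulVec_dot {d : ℕ} (u v w : Idx d → ℝ) :
    v ⬝ᵥ (vecMulVec u u *ᵥ w) = (v ⬝ᵥ u) * (u ⬝ᵥ w) := by
  calc v ⬝ᵥ (vecMulVec u u *ᵥ w) = ∑ a, ∑ b, (v a * u a) * (u b * w b) := by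
        simp only [dotProduct, mulVec, vecMulVec_apply, Finset.mul_sum]
        exact Finset.sum_congr rfl fun a _ => Finset.sum_congr rfl fun b _ => by ring
    _ = (v ⬝ᵥ u) * (u ⬝ᵥ w) := by rw [dotProduct, dotProduct, Finset.sum_mul_sum]

lemma dotM {d : ℕ} (c : ℝ) (v w : Idx d → ℝ) :
    v ⬝ᵥ ((c • (Jmat d + (2:ℝ) • (1 : Matrix (Idx d) (Idx d) ℝ))) *ᵥ w)
      = c * ((v ⬝ᵥ oneVec d) * (oneVec d ⬝ᵥ w) + 2 * (v ⬝ᵥ w)) := by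
  rw [smul_mulVec, dotProduct_smul, add_mulVec, dotProduct_add, smul_mulVec,
    one_mulVec, dotProduct_smul, Jmat, vecMulVec_dot]
  simp [smul_eq_mul]

lemma keyE {d N : ℕ} (q : Fin N → Fin d → ℝ) (A : Matrix (Fin N) (Idx d) ℝ)
    (hA : ∀ i, A i = hvec (q i)) (v w : Idx d → ℝ) :
    v ⬝ᵥ ((Aᵀ * A) *ᵥ w) = ∑ k, (hvec (q k) ⬝ᵥ v) * (hvec (q k) ⬝ᵥ w) := by
  rw [← mulVec_mulVec, dotProduct_mulVec, vecMul_transpose]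
  simp [dotProduct, mulVec, hA]


end Aux

/-- If `AᵀA = (N/(d(d+2))) (1_d 1_dᵀ + 2I)` for the minimum number
`N = d(d+1)/2` of unit parameter vectors, then the vectors are equiangular:
`|q_i ⬝ q_j| = 1/√(d+2)` for all `i ≠ j`. -/
theorem stmt_8 {d : ℕ} (hd : 0 < d)
    (q : Fin (d * (d + 1) / 2) → Fin d → ℝ) (hq : ∀ i, ∑ k, q i k ^ 2 = 1)
    (A : Matrix (Fin (d * (d + 1) / 2)) (Idx d) ℝ) (hA : ∀ i, A i = hvec (q i))
    (hATA : Aᵀ * A = (((d * (d + 1) / 2 : ℕ) : ℝ) / ((d : ℝ) * ((d : ℝ) + 2))) •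
      (Jmat d + (2 : ℝ) • (1 : Matrix (Idx d) (Idx d) ℝ))) :
    ∀ i j, i ≠ j → |q i ⬝ᵥ q j| = 1 / Real.sqrt ((d : ℝ) + 2) := by
  have hdR : (0:ℝ) < (d:ℝ) := by exact_mod_cast hd
  have hd2 : (0:ℝ) < (d:ℝ) + 2 := by linarith
  have hNcast : ((d * (d + 1) / 2 : ℕ) : ℝ) * 2 = (d:ℝ) * ((d:ℝ) + 1) := by
    have h2 : d * (d + 1) / 2 * 2 = d * (d + 1) := Nat.div_mul_cancel (Nat.even_mul_succ_self d).two_dvd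
    exact_mod_cast congrArg (Nat.cast : ℕ → ℝ) h2
  have hNr : ((d * (d + 1) / 2 : ℕ) : ℝ) = (d:ℝ) * ((d:ℝ) + 1) / 2 := by linarith
  set c : ℝ := ((d * (d + 1) / 2 : ℕ) : ℝ) / ((d:ℝ) * ((d:ℝ) + 2)) with hc
  have hqq : ∀ k : Fin (d * (d + 1) / 2), q k ⬝ᵥ q k = 1 := fun k => by
    simpa [dotProduct, pow_two] using hq k
  have hone : ∀ k, hvec (q k) ⬝ᵥ oneVec d = 1 := fun k => hvec_dot_one _ (hq k)
  intro i j hij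
  set t : Fin (d * (d + 1) / 2) → ℝ := fun k => (q k ⬝ᵥ q i) ^ 2 with ht
  have key1 : ∑ k, t k * t k = c * 3 := by
    have h1 := keyE q A hA (hvec (q i)) (hvec (q i))
    rw [hATA, dotM] at h1
    simp only [hvec_dot, hone, dotProduct_comm (oneVec d), hqq, one_pow] at h1
    calc ∑ k, t k * t k = c * (1 * 1 + 2 * 1) := h1.symm
      _ = c * 3 := by ring
  have key2 : ∑ k, t k = c * ((d:ℝ) + 2) := by
    have h1 := keyE q A hA (hvec (q i)) (oneVec d)
    rw [hATA, dotM] at h1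
    simp only [hvec_dot, hone, one_dot_one, dotProduct_comm (oneVec d)] at h1
    simp only [mul_one] at h1
    calc ∑ k, t k = c * (1 * (d:ℝ) + 2) := h1.symm
      _ = c * ((d:ℝ) + 2) := by ring
  set a : ℝ := 1 / ((d:ℝ) + 2) with haa
  have hexp : ∀ k, (t k - a) ^ 2 = t k * t k - 2 * a * t k + a ^ 2 := fun k => by ring
  have hsum : ∑ k, (t k - a) ^ 2 = c * 3 - 2 * a * (c * ((d:ℝ)+2)) + ((d * (d + 1) / 2 : ℕ) : ℝ) * a ^ 2 := by
    rw [Finset.sum_congr rfl fun k _ => hexp k]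
    rw [Finset.sum_add_distrib, Finset.sum_sub_distrib, ← Finset.mul_sum, key1, key2,
      Finset.sum_const, Finset.card_univ, Fintype.card_fin, nsmul_eq_mul]
  have hval : c * 3 - 2 * a * (c * ((d:ℝ)+2)) + ((d * (d + 1) / 2 : ℕ) : ℝ) * a ^ 2
      = (((d:ℝ)+1) / ((d:ℝ)+2)) ^ 2 := by
    rw [hc, haa, hNr]
    field_simp
    ring
  have hti : (t i - a) ^ 2 = (((d:ℝ)+1) / ((d:ℝ)+2)) ^ 2 := by
    rw [ht]; simp only [hqq i, one_pow]
    rw [haa]; field_simp; ring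
  have hrest : ∑ k ∈ Finset.univ.erase i, (t k - a) ^ 2 = 0 := by
    have := Finset.add_sum_erase Finset.univ (fun k => (t k - a) ^ 2) (Finset.mem_univ i)
    rw [hsum, hval] at this
    rw [hti] at this
    linarith
  have hj : (t j - a) ^ 2 = 0 := by
    have := (Finset.sum_eq_zero_iff_of_nonneg (fun k _ => sq_nonneg (t k - a))).mp hrest j
    exact this (Finset.mem_erase.mpr ⟨hij.symm, Finset.mem_univ j⟩)
  have htj : (q i ⬝ᵥ q j) ^ 2 = a := by
    have h0 : t j = a := by
      have := pow_eq_zero_iff (n := 2) (by norm_num) |>.mp hj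
      linarith [this]
    rw [dotProduct_comm]; exact h0
  have final : |q i ⬝ᵥ q j| = 1 / Real.sqrt ((d : ℝ) + 2) := by
    rw [← Real.sqrt_sq_eq_abs, htj, haa, one_div, Real.sqrt_inv, one_div]
  exact final
end

section
/- Let N = N_min = d(d+1)/2 and let q_1, …, q_N be unit vectors in ℝ^d with |q_i · q_j| = 1/√(d+2) for all i ≠ j. Then A = (h(q_1), …, h(q_N))ᵀ satisfies AᵀA = (N/(d(d+2)))·(1_d·1_dᵀ + 2I). -/
open Matrix

section aux

lemma sq_sum_split {d : ℕ} (g : Fin d → ℝ) :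
    (∑ k, g k) ^ 2 = ∑ k, g k ^ 2 +
      2 * ∑ p : {p : Fin d × Fin d // p.1 < p.2}, g p.1.1 * g p.1.2 := by
  have hsub : ∑ p : {p : Fin d × Fin d // p.1 < p.2}, g p.1.1 * g p.1.2
      = ∑ p ∈ Finset.univ.filter (fun p : Fin d × Fin d => p.1 < p.2), g p.1 * g p.2 := by
    rw [Finset.sum_subtype (p := fun p : Fin d × Fin d => p.1 < p.2)
      (Finset.univ.filter (fun p : Fin d × Fin d => p.1 < p.2))
      (by intro p; simp) (fun p => g p.1 * g p.2)]
  have hswap : ∑ p ∈ Finset.univ.filter (fun p : Fin d × Fin d => p.2 < p.1), g p.1 * g p.2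
      = ∑ p ∈ Finset.univ.filter (fun p : Fin d × Fin d => p.1 < p.2), g p.1 * g p.2 := by
    refine Finset.sum_nbij' (fun p => Prod.swap p) (fun p => Prod.swap p) ?_ ?_ ?_ ?_ ?_ <;>
      simp [mul_comm]
  have hdiag : ∑ p ∈ Finset.univ.filter
        (fun p : Fin d × Fin d => ¬ p.1 < p.2 ∧ ¬ p.2 < p.1), g p.1 * g p.2
      = ∑ k, g k ^ 2 := by
    refine Finset.sum_nbij' (fun p => p.1) (fun k => (k, k)) ?_ ?_ ?_ ?_ ?_
    · intro a _; exact Finset.mem_univ _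
    · intro k _; simp
    · intro a ha; simp only [Finset.mem_filter] at ha
      have : a.1 = a.2 := le_antisymm (not_lt.mp ha.2.2) (not_lt.mp ha.2.1)
      ext <;> simp [this]
    · intro k _; rfl
    · intro a ha; simp only [Finset.mem_filter] at ha
      have h2 : a.1 = a.2 := le_antisymm (not_lt.mp ha.2.2) (not_lt.mp ha.2.1)
      rw [← h2]; ring
  have expand : (∑ k, g k) ^ 2 = ∑ p : Fin d × Fin d, g p.1 * g p.2 := by
    rw [sq, Finset.sum_mul_sum, Fintype.sum_prod_type]
  rw [expand, ← Finset.sum_filter_add_sum_filter_not Finset.univ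
    (fun p : Fin d × Fin d => p.1 < p.2) (fun p => g p.1 * g p.2),
    ← Finset.sum_filter_add_sum_filter_not
    (Finset.univ.filter (fun p : Fin d × Fin d => ¬ p.1 < p.2))
    (fun p : Fin d × Fin d => p.2 < p.1) (fun p => g p.1 * g p.2),
    Finset.filter_filter]
  have h1 : Finset.univ.filter (fun p : Fin d × Fin d => ¬ p.1 < p.2 ∧ p.2 < p.1)
      = Finset.univ.filter (fun p : Fin d × Fin d => p.2 < p.1) := by
    apply Finset.filter_congr; intro p _
    constructor
    · exact fun h => h.2
    · exact fun h => ⟨lt_asymm h, h⟩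
  rw [h1, hswap, Finset.filter_filter, hdiag, hsub]; ring

lemma hvec_dot_s9 {d : ℕ} (x y : Fin d → ℝ) :
    ∑ a : Idx d, hvec x a * hvec y a = (∑ k, x k * y k) ^ 2 := by
  rw [Fintype.sum_sum_type, sq_sum_split (fun k => x k * y k)]
  simp only [hvec, Sum.elim_inl, Sum.elim_inr]
  have h2 : Real.sqrt 2 * Real.sqrt 2 = 2 := Real.mul_self_sqrt (by norm_num)
  have key : ∀ p : {p : Fin d × Fin d // p.1 < p.2},
      Real.sqrt 2 * (x p.1.1 * x p.1.2) * (Real.sqrt 2 * (y p.1.1 * y p.1.2))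
      = 2 * ((x p.1.1 * y p.1.1) * (x p.1.2 * y p.1.2)) := by
    intro p
    have e : Real.sqrt 2 * (x p.1.1 * x p.1.2) * (Real.sqrt 2 * (y p.1.1 * y p.1.2))
        = (Real.sqrt 2 * Real.sqrt 2) * ((x p.1.1 * y p.1.1) * (x p.1.2 * y p.1.2)) := by ring
    rw [e, h2]
  rw [Finset.sum_congr rfl (fun p _ => key p), ← Finset.mul_sum]
  congr 1
  exact Finset.sum_congr rfl (fun k _ => by ring)

lemma mul_vecMulVec' {I J K : Type*} [Fintype J] (M : Matrix I J ℝ) (v : J → ℝ) (w : K → ℝ) :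
    M * vecMulVec v w = vecMulVec (M *ᵥ v) w := by
  ext i j
  simp [Matrix.mul_apply, vecMulVec_apply, mulVec, dotProduct, Finset.sum_mul, mul_assoc]

lemma vecMulVec_mulVec' {I J K : Type*} [Fintype K] (a : I → ℝ) (M : Matrix J K ℝ) (v : K → ℝ) :
    vecMulVec a (M *ᵥ v) = vecMulVec a v * Mᵀ := by
  ext i j
  simp [Matrix.mul_apply, vecMulVec_apply, mulVec, dotProduct, Finset.mul_sum]
  apply Finset.sum_congr rfl; intro k _; ring

lemma vecMulVec_mulVec2 {I J : Type*} [Fintype J] (a : I → ℝ) (b : J → ℝ) (x : J → ℝ) :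
    vecMulVec a b *ᵥ x = (b ⬝ᵥ x) • a := by
  ext i
  simp only [vecMulVec_apply, mulVec, dotProduct, Pi.smul_apply, smul_eq_mul,
    Finset.sum_mul]
  apply Finset.sum_congr rfl; intro k _; ring

lemma sum_oneVec_sq (d : ℕ) : ∑ a : Idx d, oneVec d a * oneVec d a = (d : ℝ) := by
  rw [Fintype.sum_sum_type]
  simp [oneVec]

lemma JJ (d : ℕ) : Jmat d * Jmat d = (d : ℝ) • Jmat d := by
  rw [Jmat, mul_vecMulVec', vecMulVec_mulVec2]
  rw [show oneVec d ⬝ᵥ oneVec d = (d:ℝ) from sum_oneVec_sq d]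
  ext i j; simp [vecMulVec_apply, smul_smul, mul_assoc]

lemma card_pairs (d : ℕ) : 2 * Fintype.card {p : Fin d × Fin d // p.1 < p.2} = d * d - d := by
  rw [Fintype.card_subtype]
  have hswap : (Finset.univ.filter (fun p : Fin d × Fin d => p.1 < p.2)).card
      = (Finset.univ.filter (fun p : Fin d × Fin d => p.2 < p.1)).card := by
    refine Finset.card_nbij' (fun p => Prod.swap p) (fun p => Prod.swap p) ?_ ?_ ?_ ?_ <;>
      simp [Set.MapsTo, Set.LeftInvOn, Set.RightInvOn]
  have hunion : Finset.univ.filter (fun p : Fin d × Fin d => p.1 < p.2) ∪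
      Finset.univ.filter (fun p : Fin d × Fin d => p.2 < p.1)
      = (Finset.univ : Finset (Fin d)).offDiag := by
    ext p
    simp only [Finset.mem_union, Finset.mem_filter, Finset.mem_univ, true_and,
      Finset.mem_offDiag]
    constructor
    · rintro (h | h) he
      · exact absurd he (ne_of_lt h)
      · exact absurd he (ne_of_gt h)
    · intro h
      exact lt_or_gt_of_ne h
  have hdisj : Disjoint (Finset.univ.filter (fun p : Fin d × Fin d => p.1 < p.2))
      (Finset.univ.filter (fun p : Fin d × Fin d => p.2 < p.1)) :=
    (Finset.disjoint_filter).mpr (fun p _ h h' => lt_asymm h h')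
  have hcu := Finset.card_union_of_disjoint hdisj
  rw [hunion, Finset.offDiag_card, Finset.card_univ, Fintype.card_fin] at hcu
  omega

lemma card_Idx (d : ℕ) (hd : 0 < d) : Fintype.card (Idx d) = d * (d + 1) / 2 := by
  have hp := card_pairs d
  have h2 : d * (d + 1) / 2 * 2 = d * (d + 1) :=
    Nat.div_mul_cancel (Nat.even_mul_succ_self d).two_dvd
  rw [Fintype.card_sum, Fintype.card_fin]
  have e1 : d * (d + 1) = d * d + d := by ring
  have e2 : d ≤ d * d := Nat.le_mul_of_pos_left d hd
  omega

end aux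

/-- If the `N = d(d+1)/2` unit parameter vectors are equiangular with
`|q_i ⬝ q_j| = 1/√(d+2)`, then `AᵀA = (N/(d(d+2))) (1_d 1_dᵀ + 2I)`. -/
theorem stmt_9 {d : ℕ} (hd : 0 < d)
    (q : Fin (d * (d + 1) / 2) → Fin d → ℝ) (hq : ∀ i, ∑ k, q i k ^ 2 = 1)
    (A : Matrix (Fin (d * (d + 1) / 2)) (Idx d) ℝ) (hA : ∀ i, A i = hvec (q i))
    (hang : ∀ i j, i ≠ j → |q i ⬝ᵥ q j| = 1 / Real.sqrt ((d : ℝ) + 2)) :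
    Aᵀ * A = (((d * (d + 1) / 2 : ℕ) : ℝ) / ((d : ℝ) * ((d : ℝ) + 2))) •
      (Jmat d + (2 : ℝ) • (1 : Matrix (Idx d) (Idx d) ℝ)) := by
  have hd2 : (0:ℝ) < (d:ℝ) + 2 := by positivity
  have hdR : (0:ℝ) < (d:ℝ) := by exact_mod_cast hd
  set α : ℝ := ((d:ℝ) + 1) / ((d:ℝ) + 2) with hαdef
  set β : ℝ := 1 / ((d:ℝ) + 2) with hβdef
  have hα : 0 < α := by positivity
  have hβ : 0 < β := by positivity
  set w : Fin (d * (d + 1) / 2) → ℝ := fun _ => 1 with hwdef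
  set u : Idx d → ℝ := oneVec d with hudef
  -- Gram matrix
  have hGram : A * Aᵀ = α • (1 : Matrix _ _ ℝ) + β • vecMulVec w w := by
    ext i j
    have hdot : (A * Aᵀ) i j = (q i ⬝ᵥ q j) ^ 2 := by
      rw [Matrix.mul_apply]
      simp only [transpose_apply, hA]
      rw [hvec_dot_s9]
      rfl
    rcases eq_or_ne i j with rfl | hij
    · have h1 : q i ⬝ᵥ q i = 1 := by
        rw [dotProduct]
        rw [show ∑ k, q i k * q i k = ∑ k, q i k ^ 2 from
          Finset.sum_congr rfl (fun k _ => (sq (q i k)).symm), hq i]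
      rw [hdot, h1]
      simp only [one_pow, Matrix.add_apply, Matrix.smul_apply, Matrix.one_apply_eq,
        vecMulVec_apply, hwdef, mul_one, smul_eq_mul]
      rw [hαdef, hβdef]
      field_simp
      ring
    · have h1 : (q i ⬝ᵥ q j) ^ 2 = β := by
        rw [← sq_abs, hang i j hij, div_pow, one_pow, Real.sq_sqrt hd2.le, hβdef]
      rw [hdot, h1]
      simp [Matrix.one_apply, hij, vecMulVec_apply, hwdef]
  -- A applied to oneVec gives the all-ones vector
  have hw : A *ᵥ u = w := by
    ext i
    rw [mulVec, dotProduct]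
    simp only [hA]
    rw [Fintype.sum_sum_type]
    simp [hvec, oneVec, hudef, hq i, hwdef]
  -- positive definiteness and invertibility
  have hPD : (A * Aᵀ).PosDef := by
    rw [posDef_iff_dotProduct_mulVec]
    constructor
    · rw [hGram]
      ext i j
      simp only [conjTranspose_apply, Matrix.add_apply, Matrix.smul_apply, Matrix.one_apply,
        vecMulVec_apply, smul_eq_mul, star_trivial, hwdef]
      rcases eq_or_ne i j with rfl | hij
      · simp
      · simp [hij, Ne.symm hij]
    · intro x hx
      rw [hGram, add_mulVec, smul_mulVec, one_mulVec, smul_mulVec,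
        vecMulVec_mulVec2]
      have hxx : 0 < x ⬝ᵥ x := by
        rw [dotProduct]
        have hex : ∃ i, x i ≠ 0 := Function.ne_iff.mp hx
        obtain ⟨i0, hi0⟩ := hex
        apply Finset.sum_pos' (fun i _ => mul_self_nonneg _)
        exact ⟨i0, Finset.mem_univ _, mul_self_pos.mpr hi0⟩
      have hsq : 0 ≤ (w ⬝ᵥ x) * (x ⬝ᵥ w) := by
        rw [dotProduct_comm x w]
        exact mul_self_nonneg _
      simp only [star_trivial, dotProduct_add, dotProduct_smul, smul_eq_mul]
      nlinarith [mul_nonneg hβ.le hsq, mul_pos hα hxx]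
  set M : Matrix (Idx d) (Idx d) ℝ := Aᵀ * A with hMdef
  -- `M` is invertible, via a square reindexing of `A`
  have hcard : Fintype.card (Fin (d * (d + 1) / 2)) = Fintype.card (Idx d) := by
    rw [Fintype.card_fin, card_Idx d hd]
  obtain ⟨e⟩ : Nonempty (Fin (d * (d + 1) / 2) ≃ Idx d) :=
    ⟨Fintype.equivOfCardEq hcard⟩
  set Asq : Matrix (Fin (d * (d + 1) / 2)) (Fin (d * (d + 1) / 2)) ℝ :=
    A.submatrix id e with hAsq
  have hBsq : A * Aᵀ = Asq * Asqᵀ := by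
    ext i j
    rw [Matrix.mul_apply, Matrix.mul_apply]
    simp only [hAsq, submatrix_apply, transpose_apply, id]
    exact (Equiv.sum_comp e (fun a => A i a * A j a)).symm
  have hMsub : Asqᵀ * Asq = M.submatrix e e := by
    ext k l
    rw [Matrix.mul_apply, hMdef, submatrix_apply, Matrix.mul_apply]
    simp only [hAsq, submatrix_apply, transpose_apply, id]
  have hdetsq : IsUnit Asq.det := by
    have h := hPD.det_pos
    rw [hBsq, det_mul, det_transpose] at h
    exact (mul_self_pos.mp h).isUnit
  have hdetM : IsUnit M.det := by
    have h1 : (M.submatrix e e).det = M.det := Matrix.det_submatrix_equiv_self e M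
    rw [← h1, ← hMsub, det_mul, det_transpose]
    exact hdetsq.mul hdetsq
  -- key linear equation for M
  have e1 : M * Aᵀ = (α • (1 : Matrix (Idx d) (Idx d) ℝ) + β • (M * Jmat d)) * Aᵀ := by
    calc M * Aᵀ = Aᵀ * (A * Aᵀ) := by rw [hMdef, Matrix.mul_assoc]
    _ = α • Aᵀ + β • (Aᵀ * vecMulVec w w) := by
        rw [hGram, Matrix.mul_add, Matrix.mul_smul, Matrix.mul_one, Matrix.mul_smul]
    _ = α • Aᵀ + β • (vecMulVec (M *ᵥ u) w) := by
        rw [mul_vecMulVec', ← hw, Matrix.mulVec_mulVec, ← hMdef]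
    _ = α • Aᵀ + β • (vecMulVec (M *ᵥ u) u * Aᵀ) := by
        rw [← hw, vecMulVec_mulVec']
    _ = α • Aᵀ + β • ((M * Jmat d) * Aᵀ) := by
        rw [Jmat, ← hudef, mul_vecMulVec']
    _ = (α • (1 : Matrix (Idx d) (Idx d) ℝ) + β • (M * Jmat d)) * Aᵀ := by
        rw [Matrix.add_mul, Matrix.smul_mul, Matrix.smul_mul, Matrix.one_mul]
  have e1' : M * M = (α • (1 : Matrix (Idx d) (Idx d) ℝ) + β • (M * Jmat d)) * M := by
    have h := congrArg (fun Z => Z * A) e1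
    simp only [Matrix.mul_assoc] at h
    rw [← hMdef] at h
    rw [← Matrix.mul_assoc] at h ⊢
    exact h
  have e2 : M = α • (1 : Matrix (Idx d) (Idx d) ℝ) + β • (M * Jmat d) := by
    have h := congrArg (fun Z => Z * M⁻¹) e1'
    simpa [Matrix.mul_nonsing_inv_cancel_right _ _ hdetM] using h
  have hKey : M * ((1 : Matrix (Idx d) (Idx d) ℝ) - β • Jmat d) = α • 1 := by
    rw [Matrix.mul_sub, Matrix.mul_one, Matrix.mul_smul]
    exact sub_eq_iff_eq_add.mpr e2
  -- the target matrix satisfies the same equation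
  set c : ℝ := ((d * (d + 1) / 2 : ℕ) : ℝ) / ((d : ℝ) * ((d : ℝ) + 2)) with hcdef
  have hcast : ((d * (d + 1) / 2 : ℕ) : ℝ) = (d : ℝ) * ((d : ℝ) + 1) / 2 := by
    rw [Nat.cast_div (Nat.even_mul_succ_self d).two_dvd (by norm_num)]
    push_cast; ring
  have hc2 : 2 * c = α := by
    rw [hcdef, hcast, hαdef]
    field_simp
  set T : Matrix (Idx d) (Idx d) ℝ :=
    c • (Jmat d + (2 : ℝ) • (1 : Matrix (Idx d) (Idx d) ℝ)) with hTdef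
  have hT : T * ((1 : Matrix (Idx d) (Idx d) ℝ) - β • Jmat d) = α • 1 := by
    rw [hTdef, Matrix.smul_mul]
    have expand : (Jmat d + (2 : ℝ) • (1 : Matrix (Idx d) (Idx d) ℝ)) *
        ((1 : Matrix (Idx d) (Idx d) ℝ) - β • Jmat d)
        = (1 - β * (d:ℝ) - 2 * β) • Jmat d + (2:ℝ) • 1 := by
      rw [Matrix.add_mul, Matrix.mul_sub, Matrix.mul_sub, Matrix.mul_one, Matrix.mul_one,
        Matrix.mul_smul, Matrix.mul_smul, JJ, Matrix.smul_mul, Matrix.one_mul,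
        smul_smul]
      module
    rw [expand]
    have hcoef : 1 - β * (d:ℝ) - 2 * β = 0 := by
      rw [hβdef]; field_simp; ring
    rw [hcoef, zero_smul, zero_add, smul_smul, mul_comm c 2, hc2]
  -- conclude M = T
  have hC1 : (α⁻¹ • M) * ((1 : Matrix (Idx d) (Idx d) ℝ) - β • Jmat d) = 1 := by
    rw [Matrix.smul_mul, hKey, smul_smul, inv_mul_cancel₀ hα.ne', one_smul]
  have hC2 : ((1 : Matrix (Idx d) (Idx d) ℝ) - β • Jmat d) * (α⁻¹ • M) = 1 :=
    mul_eq_one_comm.mp hC1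
  have hTM : T = M := by
    calc T = T * (((1 : Matrix (Idx d) (Idx d) ℝ) - β • Jmat d) * (α⁻¹ • M)) := by
          rw [hC2, Matrix.mul_one]
    _ = (T * ((1 : Matrix (Idx d) (Idx d) ℝ) - β • Jmat d)) * (α⁻¹ • M) := by
          rw [Matrix.mul_assoc]
    _ = (α • (1 : Matrix (Idx d) (Idx d) ℝ)) * (α⁻¹ • M) := by rw [hT]
    _ = M := by
          rw [Matrix.smul_mul, Matrix.one_mul, smul_smul, mul_inv_cancel₀ hα.ne', one_smul]
  exact hTM.symm
end

section
/- There do not exist 10 unit vectors q_1, …, q_{10} in ℝ^4 such that |q_i · q_j| = 1/√6 for all i ≠ j. -/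
open Matrix

lemma sum_pm_int {ι : Type*} [DecidableEq ι] (s : Finset ι) (f : ι → ℝ)
    (h : ∀ k ∈ s, f k = 1 ∨ f k = -1) : ∃ n : ℤ, ∑ k ∈ s, f k = n := by
  classical
  induction s using Finset.induction with
  | empty => exact ⟨0, by simp⟩
  | @insert a t ha ih =>
    obtain ⟨n, hn⟩ := ih (fun k hk => h k (Finset.mem_insert_of_mem hk))
    rcases h _ (Finset.mem_insert_self a t) with h1 | h1
    · exact ⟨n + 1, by rw [Finset.sum_insert ha, hn, h1]; push_cast; ring⟩
    · exact ⟨n - 1, by rw [Finset.sum_insert ha, hn, h1]; push_cast; ring⟩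

lemma swap4 {α β : Type*} [Fintype α] [Fintype β] (F : α → α → β → β → ℝ) :
    ∑ i, ∑ j, ∑ a, ∑ b, F i j a b = ∑ a, ∑ b, ∑ i, ∑ j, F i j a b := by
  calc ∑ i, ∑ j, ∑ a, ∑ b, F i j a b
      = ∑ i, ∑ a, ∑ j, ∑ b, F i j a b :=
        Finset.sum_congr rfl fun i _ => Finset.sum_comm
    _ = ∑ a, ∑ i, ∑ j, ∑ b, F i j a b := Finset.sum_comm
    _ = ∑ a, ∑ i, ∑ b, ∑ j, F i j a b :=
        Finset.sum_congr rfl fun a _ => Finset.sum_congr rfl fun i _ => Finset.sum_comm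
    _ = ∑ a, ∑ b, ∑ i, ∑ j, F i j a b :=
        Finset.sum_congr rfl fun a _ => Finset.sum_comm

/-- There do not exist 10 unit vectors in ℝ⁴ such that `|q_i ⬝ q_j| = 1/√6`
for all `i ≠ j`. -/
theorem stmt_10 :
    ¬ ∃ q : Fin 10 → Fin 4 → ℝ,
      (∀ i, ∑ k, q i k ^ 2 = 1) ∧
      ∀ i j, i ≠ j → |q i ⬝ᵥ q j| = 1 / Real.sqrt 6 := by
  rintro ⟨q, hq1, hq2⟩
  classical
  set c : Fin 10 → Fin 10 → ℝ := fun i j => ∑ m, q i m * q j m with hc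
  have hdot : ∀ i j, q i ⬝ᵥ q j = c i j := fun i j => rfl
  have hcii : ∀ i, c i i = 1 := by
    intro i
    have := hq1 i
    simpa [hc, sq] using this
  have habs : ∀ i j, i ≠ j → |c i j| = 1 / Real.sqrt 6 := by
    intro i j hij
    rw [← hdot]; exact hq2 i j hij
  have hsq6 : ((1 : ℝ) / Real.sqrt 6) ^ 2 = 1 / 6 := by
    rw [div_pow, one_pow, Real.sq_sqrt (by norm_num : (0:ℝ) ≤ 6)]
  have hcsq : ∀ i j, i ≠ j → (c i j) ^ 2 = 1 / 6 := by
    intro i j hij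
    rw [← sq_abs, habs i j hij, hsq6]
  -- the 4×4 matrix M = Qᵀ Q
  set M : Fin 4 → Fin 4 → ℝ := fun a b => ∑ i, q i a * q i b with hM
  -- key identity: ∑ᵢⱼ (cᵢⱼ)² = ∑ₐᵦ (Mₐᵦ)²
  have expand1 : ∀ i j : Fin 10, (c i j) ^ 2
      = ∑ a, ∑ b, (q i a * q i b) * (q j a * q j b) := by
    intro i j
    rw [hc, sq, Finset.sum_mul_sum]
    exact Finset.sum_congr rfl fun a _ => Finset.sum_congr rfl fun b _ => by ring
  have expand2 : ∀ a b : Fin 4, (M a b) ^ 2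
      = ∑ i, ∑ j, (q i a * q i b) * (q j a * q j b) := by
    intro a b
    rw [hM, sq, Finset.sum_mul_sum]
  have key : ∑ i, ∑ j, (c i j) ^ 2 = ∑ a, ∑ b, (M a b) ^ 2 := by
    calc ∑ i, ∑ j, (c i j) ^ 2
        = ∑ i, ∑ j, ∑ a, ∑ b, (q i a * q i b) * (q j a * q j b) :=
          Finset.sum_congr rfl fun i _ => Finset.sum_congr rfl fun j _ => expand1 i j
      _ = ∑ a, ∑ b, ∑ i, ∑ j, (q i a * q i b) * (q j a * q j b) :=
          swap4 (fun i j a b => (q i a * q i b) * (q j a * q j b))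
      _ = ∑ a, ∑ b, (M a b) ^ 2 :=
          Finset.sum_congr rfl fun a _ => Finset.sum_congr rfl fun b _ => (expand2 a b).symm
  -- ∑ᵢⱼ (cᵢⱼ)² = 25
  have lhs25 : ∑ i, ∑ j, (c i j) ^ 2 = 25 := by
    have hrow : ∀ i, ∑ j, (c i j) ^ 2 = 5 / 2 := by
      intro i
      rw [← Finset.sum_erase_add _ _ (Finset.mem_univ i)]
      have h1 : ∑ j ∈ Finset.univ.erase i, (c i j) ^ 2 = 9 * (1 / 6) := by
        rw [Finset.sum_congr rfl
          (fun j hj => hcsq i j (Ne.symm (Finset.ne_of_mem_erase hj)))]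
        simp [Finset.card_erase_of_mem]
      rw [h1, hcii i]
      norm_num
    rw [Finset.sum_congr rfl fun i _ => hrow i]
    norm_num
  -- trace of M is 10
  have htr : ∑ a, M a a = 10 := by
    have : ∑ a : Fin 4, M a a = ∑ i : Fin 10, ∑ a : Fin 4, q i a ^ 2 := by
      rw [Finset.sum_comm]
      exact Finset.sum_congr rfl fun a _ =>
        Finset.sum_congr rfl fun i _ => (pow_two _).symm
    rw [this, Finset.sum_congr rfl fun i _ => hq1 i]
    norm_num
  -- M = (5/2) I
  have hZ : ∑ a, ∑ b, (M a b - (if a = b then (5:ℝ)/2 else 0)) ^ 2 = 0 := by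
    have e : ∀ a b : Fin 4, (M a b - (if a = b then (5:ℝ)/2 else 0)) ^ 2
        = (M a b) ^ 2 - 5 * (if a = b then M a b else 0)
          + (if a = b then (25:ℝ)/4 else 0) := by
      intro a b; split <;> ring
    rw [Finset.sum_congr rfl fun a _ => Finset.sum_congr rfl fun b _ => e a b]
    have e2 : ∀ a : Fin 4, ∑ b, ((M a b) ^ 2 - 5 * (if a = b then M a b else 0)
          + (if a = b then (25:ℝ)/4 else 0))
        = (∑ b, (M a b) ^ 2) - 5 * M a a + 25/4 := by
      intro a
      rw [Finset.sum_add_distrib, Finset.sum_sub_distrib, ← Finset.mul_sum,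
        Finset.sum_ite_eq, Finset.sum_ite_eq]
      simp
    rw [Finset.sum_congr rfl fun a _ => e2 a]
    rw [Finset.sum_add_distrib, Finset.sum_sub_distrib, ← Finset.mul_sum, htr, ← key, lhs25]
    norm_num
  have hMval : ∀ a b : Fin 4, M a b = if a = b then (5:ℝ)/2 else 0 := by
    intro a b
    have h0 : ∀ a ∈ (Finset.univ : Finset (Fin 4)),
        ∑ b, (M a b - (if a = b then (5:ℝ)/2 else 0)) ^ 2 = 0 := by
      rw [← Finset.sum_eq_zero_iff_of_nonneg
        (fun a _ => Finset.sum_nonneg fun b _ => sq_nonneg _)]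
      exact hZ
    have h1 := (Finset.sum_eq_zero_iff_of_nonneg (fun b _ => sq_nonneg _)).mp
      (h0 a (Finset.mem_univ a)) b (Finset.mem_univ b)
    have := pow_eq_zero_iff (n := 2) (by norm_num) |>.mp h1
    linarith [this]
  -- G² = (5/2) G at entry (0,1)
  have hG2 : ∑ k, c 0 k * c k 1 = (5/2) * c 0 1 := by
    have e3 : ∀ k : Fin 10, c 0 k * c k 1
        = ∑ a, ∑ b, (q 0 a * q 1 b) * (q k a * q k b) := by
      intro k
      rw [hc, Finset.sum_mul_sum]
      exact Finset.sum_congr rfl fun a _ => Finset.sum_congr rfl fun b _ => by ring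
    calc ∑ k, c 0 k * c k 1
        = ∑ k, ∑ a, ∑ b, (q 0 a * q 1 b) * (q k a * q k b) :=
          Finset.sum_congr rfl fun k _ => e3 k
      _ = ∑ a, ∑ k, ∑ b, (q 0 a * q 1 b) * (q k a * q k b) := Finset.sum_comm
      _ = ∑ a, ∑ b, ∑ k, (q 0 a * q 1 b) * (q k a * q k b) :=
          Finset.sum_congr rfl fun a _ => Finset.sum_comm
      _ = ∑ a, ∑ b, (q 0 a * q 1 b) * M a b := by
          refine Finset.sum_congr rfl fun a _ => Finset.sum_congr rfl fun b _ => ?_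
          rw [hM, Finset.mul_sum]
      _ = ∑ a, (q 0 a * q 1 a) * (5/2) := by
          refine Finset.sum_congr rfl fun a _ => ?_
          rw [Finset.sum_congr rfl fun b _ => by rw [hMval a b]]
          simp [mul_ite]
      _ = (5/2) * c 0 1 := by
          rw [hc, Finset.mul_sum]
          exact Finset.sum_congr rfl fun a _ => by ring
  -- split off k = 0, 1
  have h01 : ((0 : Fin 10) : Fin 10) ≠ 1 := by decide
  set t : Finset (Fin 10) := Finset.univ \ {0, 1} with ht
  have hsplit : ∑ k ∈ t, c 0 k * c k 1 + ∑ k ∈ ({0, 1} : Finset (Fin 10)), c 0 k * c k 1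
      = ∑ k, c 0 k * c k 1 := Finset.sum_sdiff (Finset.subset_univ _)
  have hpair : ∑ k ∈ ({0, 1} : Finset (Fin 10)), c 0 k * c k 1 = 2 * c 0 1 := by
    rw [Finset.sum_pair h01, hcii 0, hcii 1]
    ring
  have hS : ∑ k ∈ t, c 0 k * c k 1 = c 0 1 / 2 := by
    rw [hpair, hG2] at hsplit
    linarith
  -- each term over t is ±1/6
  have hterm : ∀ k ∈ t, 6 * (c 0 k * c k 1) = 1 ∨ 6 * (c 0 k * c k 1) = -1 := by
    intro k hk
    have hk0 : k ≠ 0 := by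
      intro h; rw [ht] at hk; simp [h] at hk
    have hk1 : k ≠ 1 := by
      intro h; rw [ht] at hk; simp [h] at hk
    have h1 : |6 * (c 0 k * c k 1)| = 1 := by
      rw [abs_mul, abs_mul, habs 0 k (Ne.symm hk0), habs k 1 hk1]
      rw [abs_of_nonneg (by norm_num : (0:ℝ) ≤ 6)]
      rw [div_mul_div_comm, one_mul, ← Real.sqrt_mul_self (by norm_num : (0:ℝ) ≤ 6)]
      field_simp
      rw [Real.sq_sqrt (Real.sqrt_nonneg _)]
    rcases abs_eq (by norm_num : (0:ℝ) ≤ 1) |>.mp h1 with h | h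
    · exact Or.inl h
    · exact Or.inr h
  obtain ⟨n, hn⟩ := sum_pm_int t (fun k => 6 * (c 0 k * c k 1)) hterm
  have hsum6 : ∑ k ∈ t, 6 * (c 0 k * c k 1) = 3 * c 0 1 := by
    rw [← Finset.mul_sum, hS]; ring
  have hn2 : (n : ℝ) ^ 2 = 3 / 2 := by
    rw [← hn, hsum6]
    have := hcsq 0 1 h01
    nlinarith [this]
  have hint : (2 : ℤ) * n ^ 2 = 3 := by
    have : (2 : ℝ) * (n : ℝ) ^ 2 = 3 := by rw [hn2]; ring
    exact_mod_cast this
  have : (0 : ℤ) ≤ n ^ 2 := sq_nonneg n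
  omega
end

section
/- Let q_1, …, q_N be unit vectors in ℝ^d, R ∈ SO(d), A = (h(q_1),…,h(q_N))ᵀ and A_R = (h(Rq_1),…,h(Rq_N))ᵀ, both of rank N_min = d(d+1)/2. Then Tr((A_Rᵀ A_R)⁻¹) = Tr((AᵀA)⁻¹) and 1_dᵀ(A_Rᵀ A_R)⁻¹ 1_d = 1_dᵀ(AᵀA)⁻¹ 1_d; consequently the C-cost C(A) = (N/(N_min d(d+2)))·Tr((AᵀA)⁻¹(1_d 1_dᵀ + 2I)) is invariant under simultaneous rotation of all parameters. -/
open Matrix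

open Finset in
lemma sum_split {d : ℕ} (g : Fin d → Fin d → ℝ) :
    (∑ k, g k k) + ∑ p : {p : Fin d × Fin d // p.1 < p.2}, (g p.1.1 p.1.2 + g p.1.2 p.1.1)
      = ∑ k, ∑ l, g k l := by
  classical
  have key : ∑ p : Fin d × Fin d, g p.1 p.2
      = (∑ p ∈ univ.filter (fun p : Fin d × Fin d => p.1 = p.2), g p.1 p.2)
        + ∑ p ∈ univ.filter (fun p : Fin d × Fin d => p.1 < p.2), (g p.1 p.2 + g p.2 p.1) := by
    rw [← Finset.sum_filter_add_sum_filter_not univ (fun p : Fin d × Fin d => p.1 = p.2)]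
    congr 1
    rw [Finset.sum_add_distrib]
    rw [← Finset.sum_filter_add_sum_filter_not (univ.filter (fun p : Fin d × Fin d => ¬ p.1 = p.2)) (fun p : Fin d × Fin d => p.1 < p.2)]
    congr 1
    · apply Finset.sum_congr
      · rw [Finset.filter_filter]
        apply Finset.filter_congr
        intro p _
        constructor
        · rintro ⟨_, h⟩; exact h
        · intro h; exact ⟨ne_of_lt h, h⟩
      · intros; rfl
    · apply Finset.sum_nbij' (fun p => Prod.swap p) (fun p => Prod.swap p)
      · intro p hp
        simp only [Finset.mem_filter, Finset.mem_univ, true_and, Prod.fst_swap, Prod.snd_swap] at hp ⊢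
        omega
      · intro p hp
        simp only [Finset.mem_filter, Finset.mem_univ, true_and, Prod.fst_swap, Prod.snd_swap] at hp ⊢
        constructor
        · omega
        · omega
      · intros; simp
      · intros; simp
      · intros; rfl
  rw [← Fintype.sum_prod_type']
  rw [key]
  congr 1
  · apply (Finset.sum_nbij' (fun p : Fin d × Fin d => p.1) (fun k : Fin d => (k, k)) ?_ ?_ ?_ ?_ ?_).symm
    · intro p hp; simp
    · intro k _; simp
    · intro p hp; simp at hp; exact Prod.ext rfl hp
    · intros; rfl
    · intro p hp; simp at hp; rw [← hp]
  · exact Finset.sum_subtype (p := fun p : Fin d × Fin d => p.1 < p.2)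
      (univ.filter (fun p : Fin d × Fin d => p.1 < p.2))
      (by intro x; simp) (fun p => g p.1 p.2 + g p.2 p.1) |>.symm


noncomputable def Smat {d : ℕ} (R : Matrix (Fin d) (Fin d) ℝ) : Matrix (Idx d) (Idx d) ℝ :=
  fun α β =>
    match α, β with
    | .inl i, .inl j => R i j ^ 2
    | .inl i, .inr p => Real.sqrt 2 * (R i p.1.1 * R i p.1.2)
    | .inr p, .inl j => Real.sqrt 2 * (R p.1.1 j * R p.1.2 j)
    | .inr p, .inr r => R p.1.1 r.1.1 * R p.1.2 r.1.2 + R p.1.1 r.1.2 * R p.1.2 r.1.1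


lemma s2s2 : Real.sqrt 2 * Real.sqrt 2 = 2 := Real.mul_self_sqrt (by norm_num)


open Finset in
lemma hvec_rot {d : ℕ} (R : Matrix (Fin d) (Fin d) ℝ) (q : Fin d → ℝ) :
    hvec (R.mulVec q) = (Smat R).mulVec (hvec q) := by
  funext α
  cases α with
  | inl i =>
    show (R.mulVec q i) ^ 2 = _
    simp only [Matrix.mulVec, dotProduct, Fintype.sum_sum_type, Smat, hvec, Sum.elim_inl,
      Sum.elim_inr]
    refine Eq.trans ?_ (Eq.trans (sum_split (fun k l => (R i k * q k) * (R i l * q l))).symm ?_)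
    · rw [sq, Finset.sum_mul_sum]
    congr 1
    · apply Finset.sum_congr rfl; intros; ring
    · apply Finset.sum_congr rfl; intro p _
      linear_combination (-(R i p.1.1 * R i p.1.2 * q p.1.1 * q p.1.2)) * s2s2
  | inr p =>
    show Real.sqrt 2 * (R.mulVec q p.1.1 * R.mulVec q p.1.2) = _
    simp only [Matrix.mulVec, dotProduct, Fintype.sum_sum_type, Smat, hvec, Sum.elim_inl,
      Sum.elim_inr]
    refine Eq.trans ?_ (Eq.trans
      (sum_split (fun k l => Real.sqrt 2 * ((R p.1.1 k * q k) * (R p.1.2 l * q l)))).symm ?_)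
    · rw [Finset.sum_mul_sum, Finset.mul_sum]
      apply Finset.sum_congr rfl; intro k _
      rw [Finset.mul_sum]
    congr 1
    · apply Finset.sum_congr rfl; intros; ring
    · apply Finset.sum_congr rfl; intro r _; ring

open Finset in
lemma Smat_mul_transpose {d : ℕ} (R : Matrix (Fin d) (Fin d) ℝ) (hR : R * Rᵀ = 1) :
    Smat R * (Smat R)ᵀ = 1 := by
  have hR' : ∀ i j, (∑ k, R i k * R j k) = if i = j then (1:ℝ) else 0 := by
    intro i j
    have := congrFun (congrFun hR i) j
    simpa [Matrix.mul_apply, Matrix.one_apply] using this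
  ext α β
  rw [Matrix.mul_apply]
  simp only [Matrix.transpose_apply]
  cases α with
  | inl i =>
    cases β with
    | inl j =>
      simp only [Fintype.sum_sum_type, Smat]
      refine Eq.trans (Eq.trans ?_
        (sum_split (fun k l => (R i k * R j k) * (R i l * R j l)))) ?_
      · congr 1
        · apply Finset.sum_congr rfl; intros; ring
        · apply Finset.sum_congr rfl; intro p _
          linear_combination (R i p.1.1 * R i p.1.2 * R j p.1.1 * R j p.1.2) * s2s2
      · rw [← Finset.sum_mul_sum, hR' i j]
        simp only [Matrix.one_apply, Sum.inl.injEq]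
        split_ifs <;> norm_num
    | inr r =>
      simp only [Fintype.sum_sum_type, Smat]
      refine Eq.trans (Eq.trans ?_
        (sum_split (fun k l => Real.sqrt 2 * ((R i k * R r.1.1 k) * (R i l * R r.1.2 l))))) ?_
      · congr 1
        · apply Finset.sum_congr rfl; intros; ring
        · apply Finset.sum_congr rfl; intro p _; ring
      · have hne := r.2
        calc ∑ k, ∑ l, Real.sqrt 2 * ((R i k * R r.1.1 k) * (R i l * R r.1.2 l))
            = Real.sqrt 2 * ∑ k, ∑ l, (R i k * R r.1.1 k) * (R i l * R r.1.2 l) := by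
              rw [Finset.mul_sum]
              refine Finset.sum_congr rfl fun k _ => ?_
              rw [Finset.mul_sum]
          _ = Real.sqrt 2 * ((∑ k, R i k * R r.1.1 k) * (∑ l, R i l * R r.1.2 l)) := by
              rw [Finset.sum_mul_sum]
          _ = (1 : Matrix (Idx d) (Idx d) ℝ) (.inl i) (.inr r) := by
              rw [hR' i r.1.1, hR' i r.1.2]
              have h0 : (1 : Matrix (Idx d) (Idx d) ℝ) (.inl i) (.inr r) = 0 := by
                simp [Matrix.one_apply]
              rw [h0]
              split_ifs <;> first | (exfalso; omega) | norm_num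
  | inr p =>
    cases β with
    | inl j =>
      simp only [Fintype.sum_sum_type, Smat]
      refine Eq.trans (Eq.trans ?_
        (sum_split (fun k l => Real.sqrt 2 * ((R p.1.1 k * R j k) * (R p.1.2 l * R j l))))) ?_
      · congr 1
        · apply Finset.sum_congr rfl; intros; ring
        · apply Finset.sum_congr rfl; intro r _; ring
      · have hne := p.2
        calc ∑ k, ∑ l, Real.sqrt 2 * ((R p.1.1 k * R j k) * (R p.1.2 l * R j l))
            = Real.sqrt 2 * ∑ k, ∑ l, (R p.1.1 k * R j k) * (R p.1.2 l * R j l) := by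
              rw [Finset.mul_sum]
              refine Finset.sum_congr rfl fun k _ => ?_
              rw [Finset.mul_sum]
          _ = Real.sqrt 2 * ((∑ k, R p.1.1 k * R j k) * (∑ l, R p.1.2 l * R j l)) := by
              rw [Finset.sum_mul_sum]
          _ = (1 : Matrix (Idx d) (Idx d) ℝ) (.inr p) (.inl j) := by
              rw [hR' p.1.1 j, hR' p.1.2 j]
              have h0 : (1 : Matrix (Idx d) (Idx d) ℝ) (.inr p) (.inl j) = 0 := by
                simp [Matrix.one_apply]
              rw [h0]
              split_ifs <;> first | (exfalso; omega) | norm_num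
    | inr r =>
      simp only [Fintype.sum_sum_type, Smat]
      refine Eq.trans (Eq.trans ?_
        (sum_split (fun k l => (R p.1.1 k * R r.1.1 k) * (R p.1.2 l * R r.1.2 l)
          + (R p.1.1 k * R r.1.2 k) * (R p.1.2 l * R r.1.1 l)))) ?_
      · congr 1
        · apply Finset.sum_congr rfl; intro k _
          linear_combination (R p.1.1 k * R p.1.2 k * R r.1.1 k * R r.1.2 k) * s2s2
        · apply Finset.sum_congr rfl; intro m _; ring
      · have hp := p.2
        have hr := r.2
        calc ∑ k, ∑ l, ((R p.1.1 k * R r.1.1 k) * (R p.1.2 l * R r.1.2 l)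
              + (R p.1.1 k * R r.1.2 k) * (R p.1.2 l * R r.1.1 l))
            = (∑ k, R p.1.1 k * R r.1.1 k) * (∑ l, R p.1.2 l * R r.1.2 l)
              + (∑ k, R p.1.1 k * R r.1.2 k) * (∑ l, R p.1.2 l * R r.1.1 l) := by
              rw [Finset.sum_mul_sum, Finset.sum_mul_sum, ← Finset.sum_add_distrib]
              refine Finset.sum_congr rfl fun k _ => ?_
              rw [← Finset.sum_add_distrib]
          _ = (1 : Matrix (Idx d) (Idx d) ℝ) (.inr p) (.inr r) := by
              rw [hR', hR', hR', hR']
              simp only [Matrix.one_apply, Sum.inr.injEq, Subtype.ext_iff, Prod.ext_iff]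
              split_ifs <;> first | (exfalso; omega) | norm_num

lemma Smat_transpose {d : ℕ} (R : Matrix (Fin d) (Fin d) ℝ) : (Smat R)ᵀ = Smat Rᵀ := by
  ext α β
  cases α <;> cases β <;>
    simp only [Matrix.transpose_apply, Smat] <;> ring


lemma Smat_mulVec_one {d : ℕ} (R : Matrix (Fin d) (Fin d) ℝ) (hR : R * Rᵀ = 1) :
    (Smat R).mulVec (oneVec d) = oneVec d := by
  have hR' : ∀ i j, (∑ k, R i k * R j k) = if i = j then (1:ℝ) else 0 := by
    intro i j
    have := congrFun (congrFun hR i) j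
    simpa [Matrix.mul_apply, Matrix.one_apply] using this
  funext α
  cases α with
  | inl i =>
    simp only [Matrix.mulVec, dotProduct, Fintype.sum_sum_type, Smat, oneVec, Sum.elim_inl,
      Sum.elim_inr, Pi.one_apply, Pi.zero_apply, mul_one, mul_zero, Finset.sum_const_zero,
      add_zero]
    rw [show ∑ k, R i k ^ 2 = ∑ k, R i k * R i k from Finset.sum_congr rfl fun k _ => sq (R i k),
      hR' i i]
    simp
  | inr p =>
    have hne := p.2
    simp only [Matrix.mulVec, dotProduct, Fintype.sum_sum_type, Smat, oneVec, Sum.elim_inl,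
      Sum.elim_inr, Pi.one_apply, Pi.zero_apply, mul_one, mul_zero, Finset.sum_const_zero,
      add_zero]
    rw [← Finset.mul_sum, hR' p.1.1 p.1.2, if_neg (ne_of_lt hne), mul_zero]

lemma trace_mul_vecMulVec {n : Type*} [Fintype n] (M : Matrix n n ℝ) (u v : n → ℝ) :
    (M * vecMulVec u v).trace = v ⬝ᵥ M.mulVec u := by
  simp only [Matrix.trace, Matrix.diag, Matrix.mul_apply, Matrix.vecMulVec_apply, dotProduct,
    Matrix.mulVec, Finset.mul_sum]
  apply Finset.sum_congr rfl
  intro i _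
  apply Finset.sum_congr rfl
  intro j _
  ring

/-- The C-cost is invariant under a simultaneous rotation of all parameters. -/
theorem stmt_18 {d N : ℕ} (q : Fin N → Fin d → ℝ) (hq : ∀ i, ∑ k, q i k ^ 2 = 1)
    (R : Matrix (Fin d) (Fin d) ℝ) (hR : R * Rᵀ = 1) (hdet : R.det = 1)
    (A AR : Matrix (Fin N) (Idx d) ℝ)
    (hA : ∀ i, A i = hvec (q i)) (hAR : ∀ i, AR i = hvec (R.mulVec (q i)))
    (hrank : A.rank = d * (d + 1) / 2) (hrankR : AR.rank = d * (d + 1) / 2) :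
    ((ARᵀ * AR)⁻¹).trace = ((Aᵀ * A)⁻¹).trace ∧
      oneVec d ⬝ᵥ ((ARᵀ * AR)⁻¹).mulVec (oneVec d) =
        oneVec d ⬝ᵥ ((Aᵀ * A)⁻¹).mulVec (oneVec d) ∧
      Ccost AR = Ccost A := by
  set S := Smat R with hSdef
  have hS : S * Sᵀ = 1 := Smat_mul_transpose R hR
  have hSt : Sᵀ * S = 1 := mul_eq_one_comm.mp hS
  have hSinv : S⁻¹ = Sᵀ := Matrix.inv_eq_right_inv hS
  have hStinv : Sᵀ⁻¹ = S := Matrix.inv_eq_right_inv hSt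
  have hARA : AR = A * Sᵀ := by
    ext i α
    rw [Matrix.mul_apply, hAR i, hvec_rot, hA i]
    simp only [Matrix.mulVec, dotProduct, Matrix.transpose_apply]
    apply Finset.sum_congr rfl
    intros; ring
  have hM : ARᵀ * AR = S * ((Aᵀ * A) * Sᵀ) := by
    rw [hARA, Matrix.transpose_mul, Matrix.transpose_transpose]
    rw [Matrix.mul_assoc, Matrix.mul_assoc]
  have hinv : (ARᵀ * AR)⁻¹ = S * ((Aᵀ * A)⁻¹ * Sᵀ) := by
    rw [hM, Matrix.mul_inv_rev, Matrix.mul_inv_rev, hSinv, hStinv, Matrix.mul_assoc]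
  have h1 : Sᵀ.mulVec (oneVec d) = oneVec d := by
    rw [hSdef, Smat_transpose]
    exact Smat_mulVec_one Rᵀ (by rw [Matrix.transpose_transpose]; exact mul_eq_one_comm.mp hR)
  have h2 : S.mulVec (oneVec d) = oneVec d := Smat_mulVec_one R hR
  have htr : ((ARᵀ * AR)⁻¹).trace = ((Aᵀ * A)⁻¹).trace := by
    rw [hinv, Matrix.trace_mul_comm, Matrix.mul_assoc, hSt, Matrix.mul_one]
  have hdot : oneVec d ⬝ᵥ ((ARᵀ * AR)⁻¹).mulVec (oneVec d) =
      oneVec d ⬝ᵥ ((Aᵀ * A)⁻¹).mulVec (oneVec d) := by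
    rw [hinv, ← Matrix.mulVec_mulVec, ← Matrix.mulVec_mulVec, h1]
    rw [Matrix.dotProduct_mulVec, ← Matrix.mulVec_transpose, h1]
  refine ⟨htr, hdot, ?_⟩
  have expand : ∀ (X : Matrix (Idx d) (Idx d) ℝ),
      (X * (Jmat d + (2 : ℝ) • (1 : Matrix (Idx d) (Idx d) ℝ))).trace
        = oneVec d ⬝ᵥ X.mulVec (oneVec d) + 2 * X.trace := by
    intro X
    rw [Matrix.mul_add, Matrix.trace_add, Jmat, trace_mul_vecMulVec, Matrix.mul_smul,
      Matrix.mul_one, Matrix.trace_smul]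
    simp [smul_eq_mul]
  unfold Ccost
  rw [expand, expand, htr, hdot]
end
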